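/- Let Σ_1, Σ_2 be positive definite p×p matrices, and let λ_1, ..., λ_p > 0 be the eigenvalues of Σ_1^{-1}Σ_2 ordered such that λ_1 + 1/λ_1 ≥ ... ≥ λ_p + 1/λ_p, with corresponding eigenvectors φ_1,...,φ_p. Then for the projection W* = [φ_1,...,φ_q], the embedded Bhattacharyya overlap equals (π_1 π_2)^{1/2} · ( ∏_{j=1}^q (λ_j^{1/2} + λ_j^{-1/2})/2 )^{-1/2}. -/

import Mathlib

/-!
If `S1⁻¹ S2 φⱼ = λⱼ φⱼ`, then `S2 W = S1 W Λ` for `W = [φ₁, …, φ_q]` and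
`Λ = diag(λ₁, …, λ_q)`. With `A = Wᵀ S1 W`, which is positive definite because the `φⱼ` are
independent, this gives `Wᵀ S2 W = A Λ` and `Wᵀ (S1 + S2) W = A (1 + Λ)`. The factor `det A`
cancels from the determinant ratio in the overlap, which becomes
`∏ⱼ (1 + λⱼ) / (2 √λⱼ) = ∏ⱼ (√λⱼ + 1/√λⱼ) / 2`.
-/

open Matrix

/-- Embedded Bhattacharyya overlap of two mean-zero Gaussians under the
projection `W`. -/
noncomputable def embOverlap {p q : ℕ} (π1 π2 : ℝ)
    (S1 S2 : Matrix (Fin p) (Fin p) ℝ) (W : Matrix (Fin p) (Fin q) ℝ) : ℝ :=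
  Real.sqrt (π1 * π2) *
    ((((1 : ℝ) / 2) • (Wᵀ * (S1 + S2) * W)).det /
      Real.sqrt ((Wᵀ * S1 * W).det * (Wᵀ * S2 * W).det)) ^ (-(1 : ℝ) / 2)

namespace Matrix

variable {n m R : Type*} [Fintype n] [Fintype m] [DecidableEq m] [CommRing R]

lemma mulVec_eq_smul_mulVec_of_inv_mul_mulVec [DecidableEq n] {A B : Matrix n n R}
    {v : n → R} {c : R} (hA : IsUnit A.det) (h : (A⁻¹ * B) *ᵥ v = c • v) :
    B *ᵥ v = c • (A *ᵥ v) := by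
  rw [← mulVec_smul, ← h, mulVec_mulVec, mul_nonsing_inv_cancel_left _ _ hA]

lemma mul_eq_mul_mul_diagonal_of_mulVec_col {A B : Matrix n n R} {W : Matrix n m R} {μ : m → R}
    (h : ∀ j, B *ᵥ W.col j = μ j • (A *ᵥ W.col j)) : B * W = A * W * diagonal μ := by
  ext i j
  rw [mul_diagonal, mul_apply, mul_comm]
  simpa [mulVec, dotProduct, mul_apply] using congrFun (h j) i

end Matrix

lemma Real.sqrt_add_inv_sqrt_div_two {x : ℝ} (hx : 0 ≤ x) :
    (√x + (√x)⁻¹) / 2 = (1 + x) / (2 * √x) := by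
  rcases hx.eq_or_lt with rfl | hx
  · simp
  have hs : √x ≠ 0 := (Real.sqrt_pos.2 hx).ne'
  field_simp
  rw [Real.sq_sqrt hx.le]
  ring

lemma det_half_smul_add_mul_diagonal_div_sqrt {m : Type*} [Fintype m] [DecidableEq m]
    {A : Matrix m m ℝ} (hA : 0 < A.det) {μ : m → ℝ} (hμ : ∀ j, 0 ≤ μ j) :
    ((1 / 2 : ℝ) • (A + A * diagonal μ)).det / √(A.det * (A * diagonal μ).det)
      = ∏ j, (√(μ j) + (√(μ j))⁻¹) / 2 := by
  have hsum : A + A * diagonal μ = A * diagonal (fun j => 1 + μ j) := by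
    rw [← diagonal_add, diagonal_one, Matrix.mul_add, Matrix.mul_one]
  have hsqrt : √(A.det * (A * diagonal μ).det) = A.det * ∏ j, √(μ j) := by
    rw [det_mul, det_diagonal, ← mul_assoc, Real.sqrt_mul (mul_self_nonneg _),
      Real.sqrt_mul_self hA.le, Real.sqrt_prod _ fun j _ => hμ j]
  rw [hsum, det_smul, det_mul, det_diagonal, hsqrt]
  simp only [Real.sqrt_add_inv_sqrt_div_two (hμ _), Finset.prod_div_distrib,
    Finset.prod_mul_distrib, Finset.prod_const, Finset.card_univ]
  rw [one_div, inv_pow, mul_div_assoc, mul_div_mul_left _ _ hA.ne', div_mul_eq_div_div,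
    inv_mul_eq_div, div_right_comm]

lemma embOverlap_of_mul_eq_mul_mul_diagonal {p q : ℕ} (π1 π2 : ℝ)
    {S1 S2 : Matrix (Fin p) (Fin p) ℝ} {W : Matrix (Fin p) (Fin q) ℝ} {μ : Fin q → ℝ}
    (hW : (Wᵀ * S1 * W).PosDef) (hμ : ∀ j, 0 ≤ μ j) (hS2 : S2 * W = S1 * W * diagonal μ) :
    embOverlap π1 π2 S1 S2 W
      = √(π1 * π2) * (∏ j, (√(μ j) + (√(μ j))⁻¹) / 2) ^ (-(1 : ℝ) / 2) := by
  have hS2W : Wᵀ * S2 * W = Wᵀ * S1 * W * diagonal μ := by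
    simp only [Matrix.mul_assoc, hS2]
  rw [embOverlap, hS2W, Matrix.mul_add, Matrix.add_mul, hS2W,
    det_half_smul_add_mul_diagonal_div_sqrt hW.det_pos hμ]

theorem embOverlap_eigen_projection_general
    {p q : ℕ} (hq : q ≤ p)
    (S1 S2 : Matrix (Fin p) (Fin p) ℝ) (h1 : S1.PosDef)
    (π1 π2 : ℝ)
    (lam : Fin p → ℝ) (φ : Fin p → (Fin p → ℝ))
    (hlampos : ∀ j, 0 < lam j)
    (heig : ∀ j, (S1⁻¹ * S2).mulVec (φ j) = lam j • φ j)
    (hindep : LinearIndependent ℝ φ) :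
    embOverlap π1 π2 S1 S2 (Matrix.of fun i (j : Fin q) => φ (Fin.castLE hq j) i)
      = Real.sqrt (π1 * π2) *
        (∏ j : Fin q,
          (Real.sqrt (lam (Fin.castLE hq j))
            + (Real.sqrt (lam (Fin.castLE hq j)))⁻¹) / 2) ^ (-(1 : ℝ) / 2) := by
  set W : Matrix (Fin p) (Fin q) ℝ := Matrix.of fun i j => φ (Fin.castLE hq j) i
  have hcols : Function.Injective W.mulVec :=
    mulVec_injective_iff.2 (hindep.comp _ (Fin.castLE_injective hq))
  have hW : (Wᵀ * S1 * W).PosDef := by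
    simpa only [conjTranspose_eq_transpose_of_trivial] using h1.conjTranspose_mul_mul_same hcols
  have hS2 : S2 * W = S1 * W * diagonal (lam ∘ Fin.castLE hq) :=
    mul_eq_mul_mul_diagonal_of_mulVec_col fun j =>
      mulVec_eq_smul_mulVec_of_inv_mul_mulVec (isUnit_iff_ne_zero.2 h1.det_pos.ne') (heig _)
  exact embOverlap_of_mul_eq_mul_mul_diagonal π1 π2 hW (fun j => (hlampos _).le) hS2

/-- Value of the embedded Bhattacharyya overlap at the projection made of the
first `q` eigenvectors of `S1⁻¹ S2`. -/
theorem embOverlap_eigen_projection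
    {p q : ℕ} (hq : q ≤ p)
    (S1 S2 : Matrix (Fin p) (Fin p) ℝ) (h1 : S1.PosDef) (h2 : S2.PosDef)
    (π1 π2 : ℝ) (hπ1 : 0 < π1) (hπ2 : 0 < π2) (hsum : π1 + π2 = 1)
    (lam : Fin p → ℝ) (φ : Fin p → (Fin p → ℝ))
    (hlampos : ∀ j, 0 < lam j)
    (heig : ∀ j, (S1⁻¹ * S2).mulVec (φ j) = lam j • φ j)
    (hindep : LinearIndependent ℝ φ)
    (horder : ∀ i j : Fin p, i ≤ j → lam j + (lam j)⁻¹ ≤ lam i + (lam i)⁻¹) :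
    embOverlap π1 π2 S1 S2 (Matrix.of fun i (j : Fin q) => φ (Fin.castLE hq j) i)
      = Real.sqrt (π1 * π2) *
        (∏ j : Fin q,
          (Real.sqrt (lam (Fin.castLE hq j))
            + (Real.sqrt (lam (Fin.castLE hq j)))⁻¹) / 2) ^ (-(1 : ℝ) / 2) :=
  embOverlap_eigen_projection_general hq S1 S2 h1 π1 π2 lam φ hlampos heig hindep
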